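/- (Theorem 4(a),(b).) Under the hypotheses of Theorem 2 (closed-loop unicycle dynamics with the range-only controller ω = v/d + v·k₁·Ω(β) + v·k₂·((r − d)/r)·η(r − d), auxiliary state ż = −κ·z + (1/2)·r², β = −κ·z + (1/2)·r², v ≠ 0 constant, k₁, k₂, κ > 0, r(0) ∈ (r_i, r_o)), set V₂(0) = (1/2)(ē_x(0)² + ē_y(0)²) + d·k₂·V_r(r(0) − d) + d·k₁·∫₀^{β(0)} Ω(τ) dτ and Υ₂ = √(1 − exp(−2·V₂(0)/(d·k₂))). Then for all t ≥ 0: ē_x(t)² + ē_y(t)² ≤ 2·V₂(0), −δ_a·Υ₂ ≤ r(t) − d ≤ δ_b·Υ₂, and r_i + δ_a·(1 − Υ₂) ≤ r(t) ≤ r_o − δ_b·(1 − Υ₂). -/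

import Mathlib

/-- Range r(t) = √((x(t) − x_T)² + (y(t) − y_T)²). -/
noncomputable def rng (x y : ℝ → ℝ) (xT yT : ℝ) (t : ℝ) : ℝ :=
  Real.sqrt ((x t - xT) ^ 2 + (y t - yT) ^ 2)

/-- Transformed error ē_x(t) = (x(t) − x_T)·cos θ(t) + (y(t) − y_T)·sin θ(t). -/
noncomputable def ebx (x y θ : ℝ → ℝ) (xT yT : ℝ) (t : ℝ) : ℝ :=
  (x t - xT) * Real.cos (θ t) + (y t - yT) * Real.sin (θ t)

/-- Transformed error ē_y(t) = −(x(t) − x_T)·sin θ(t) + (y(t) − y_T)·cos θ(t) + d. -/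
noncomputable def eby (x y θ : ℝ → ℝ) (xT yT d : ℝ) (t : ℝ) : ℝ :=
  -(x t - xT) * Real.sin (θ t) + (y t - yT) * Real.cos (θ t) + d

/-- The asymmetric barrier Lyapunov function V_r. -/
noncomputable def Vr (δa δb e : ℝ) : ℝ :=
  if 0 < e then (1 / 2) * Real.log (δb ^ 2 / (δb ^ 2 - e ^ 2))
  else (1 / 2) * Real.log (δa ^ 2 / (δa ^ 2 - e ^ 2))

/-- η(e) = 1/(δ_b² − e²) for e > 0 and η(e) = 1/(δ_a² − e²) for e ≤ 0. -/
noncomputable def eta (δa δb e : ℝ) : ℝ :=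
  if 0 < e then 1 / (δb ^ 2 - e ^ 2) else 1 / (δa ^ 2 - e ^ 2)

/-- The estimation signal β(t) = −κ·z(t) + (1/2)·r(t)². -/
noncomputable def beta (x y : ℝ → ℝ) (z : ℝ → ℝ) (κ xT yT : ℝ) (t : ℝ) : ℝ :=
  -κ * z t + (1 / 2) * (rng x y xT yT t) ^ 2


/-!
Along the closed loop the Lyapunov function
`V₂ = (ē_x² + ē_y²)/2 + d k₂ V_r(r − d) + d k₁ ∫₀^β Ω` satisfies `V̇₂ = −d k₁ κ β Ω(β) ≤ 0`:
the controller is designed so that the cross term `ē_x (v − d ω)` of the kinematic part cancels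
the derivatives of the barrier and integral terms. Hence `V₂(t) ≤ V₂(0)` as long as `r` stays in
`(r_i, r_o)`, and inverting the barrier, `V_r(r − d) ≤ V₂(0)/(d k₂)` confines `r − d` to
`[−δ_a Υ₂, δ_b Υ₂]`. Since `Υ₂ < 1` this is a closed set strictly inside the open range interval,
so a first-exit-time argument shows that `r` never leaves `(r_i, r_o)`.
-/

open Real Set Topology

theorem IsOpen.forall_ge_mem_of_trapped {α : Type*} [TopologicalSpace α] {f : ℝ → α}
    {U K : Set α} {a : ℝ} (hU : IsOpen U) (hK : IsClosed K) (hKU : K ⊆ U)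
    (hf : ContinuousOn f (Ici a)) (ha : f a ∈ U)
    (htrap : ∀ T ≥ a, (∀ s ∈ Icc a T, f s ∈ U) → f T ∈ K) :
    ∀ t ≥ a, f t ∈ U := by
  intro b hb
  by_contra hfb
  have hS : IsCompact (Icc a b ∩ f ⁻¹' Uᶜ) :=
    isCompact_Icc.of_isClosed_subset ((hf.mono Icc_subset_Ici_self).preimage_isClosed_of_isClosed
      isClosed_Icc hU.isClosed_compl) inter_subset_left
  -- `m` is the first time in `[a, b]` at which `f` is outside `U`.
  obtain ⟨m, ⟨⟨ham, hmb⟩, hfm⟩, hmin⟩ := hS.exists_isLeast ⟨b, ⟨hb, le_rfl⟩, hfb⟩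
  have ham' : a < m := ham.lt_of_ne fun h => hfm (h ▸ ha)
  have hU_before : ∀ s ∈ Ico a m, f s ∈ U := fun s hs => by
    by_contra hfs
    exact (hmin ⟨⟨hs.1, hs.2.le.trans hmb⟩, hfs⟩).not_gt hs.2
  have hK_before : MapsTo f (Ico a m) K := fun s hs =>
    htrap s hs.1 fun u hu => hU_before u ⟨hu.1, hu.2.trans_lt hs.2⟩
  have hm_closure : m ∈ closure (Ico a m) := by
    rw [closure_Ico ham'.ne]
    exact right_mem_Icc.2 ham
  have := ((hf m ham).mono Ico_subset_Ici_self).mem_closure hm_closure hK_before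
  exact hfm (hKU (hK.closure_eq ▸ this))

section Barrier

variable {δ δa δb e M : ℝ}

lemma hasDerivAt_half_log_barrier (h : e ^ 2 < δ ^ 2) :
    HasDerivAt (fun u => 1 / 2 * log (δ ^ 2 / (δ ^ 2 - u ^ 2))) (e / (δ ^ 2 - e ^ 2)) e := by
  have hpos : 0 < δ ^ 2 - e ^ 2 := sub_pos.2 h
  have hδ : 0 < δ ^ 2 := (sq_nonneg e).trans_lt h
  have hsub : HasDerivAt (fun u => δ ^ 2 - u ^ 2) (-(2 * e)) e := by
    simpa using (hasDerivAt_pow 2 e).const_sub (δ ^ 2)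
  have hquot : HasDerivAt (fun u => δ ^ 2 / (δ ^ 2 - u ^ 2))
      (δ ^ 2 * (2 * e) / (δ ^ 2 - e ^ 2) ^ 2) e := by
    simpa [div_eq_mul_inv, mul_assoc] using (hsub.inv hpos.ne').const_mul (δ ^ 2)
  refine ((hquot.log (div_pos hδ hpos).ne').const_mul (1 / 2 : ℝ)).congr_deriv ?_
  have hδ0 : δ ≠ 0 := by rintro rfl; norm_num at hδ
  field_simp

lemma half_log_barrier_nonneg (h : e ^ 2 < δ ^ 2) :
    0 ≤ 1 / 2 * log (δ ^ 2 / (δ ^ 2 - e ^ 2)) := by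
  have hpos : 0 < δ ^ 2 - e ^ 2 := sub_pos.2 h
  have : 1 ≤ δ ^ 2 / (δ ^ 2 - e ^ 2) := by
    rw [one_le_div hpos]; nlinarith
  have := log_nonneg this
  positivity

lemma abs_le_of_half_log_barrier_le (hδ : 0 < δ) (h : e ^ 2 < δ ^ 2)
    (hM : 1 / 2 * log (δ ^ 2 / (δ ^ 2 - e ^ 2)) ≤ M) :
    |e| ≤ δ * √(1 - exp (-(2 * M))) := by
  have hpos : 0 < δ ^ 2 - e ^ 2 := sub_pos.2 h
  have hexp : δ ^ 2 / (δ ^ 2 - e ^ 2) ≤ exp (2 * M) :=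
    (log_le_iff_le_exp (by positivity)).1 (by linarith)
  rw [div_le_iff₀ hpos] at hexp
  have hsq : e ^ 2 ≤ δ ^ 2 * (1 - exp (-(2 * M))) := by
    have hone : exp (-(2 * M)) * exp (2 * M) = 1 := by rw [← exp_add]; simp
    nlinarith [mul_le_mul_of_nonneg_left hexp (exp_pos (-(2 * M))).le]
  have hnn : 0 ≤ 1 - exp (-(2 * M)) :=
    (mul_nonneg_iff_of_pos_left (by positivity)).1 ((sq_nonneg e).trans hsq)
  refine abs_le_of_sq_le_sq ?_ (by positivity)
  rwa [mul_pow, sq_sqrt hnn]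

lemma Vr_hasDerivAt (hea : -δa < e) (heb : e < δb) :
    HasDerivAt (Vr δa δb) (e * eta δa δb e) e := by
  rcases lt_trichotomy e 0 with he | rfl | he
  · have hVr : Vr δa δb =ᶠ[𝓝 e] fun u => 1 / 2 * log (δa ^ 2 / (δa ^ 2 - u ^ 2)) := by
      filter_upwards [Iio_mem_nhds he] with u hu
      simp [Vr, not_lt.2 (mem_Iio.1 hu).le]
    rw [eta, if_neg he.not_gt, mul_one_div]
    exact (hasDerivAt_half_log_barrier (by nlinarith)).congr_of_eventuallyEq hVr
  · have hleft : HasDerivWithinAt (Vr δa δb) 0 (Iic 0) 0 := by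
      have := (hasDerivAt_half_log_barrier (δ := δa) (e := 0) (by nlinarith)).hasDerivWithinAt
        (s := Iic 0)
      rw [zero_div] at this
      exact this.congr (fun u hu => by simp [Vr, not_lt.2 (mem_Iic.1 hu)]) (by simp [Vr])
    have hright : HasDerivWithinAt (Vr δa δb) 0 (Ioi 0) 0 := by
      have := (hasDerivAt_half_log_barrier (δ := δb) (e := 0) (by nlinarith)).hasDerivWithinAt
        (s := Ioi 0)
      rw [zero_div] at this
      exact this.congr (fun u hu => by simp [Vr, mem_Ioi.1 hu]) (by simp [Vr])
    rw [zero_mul, ← hasDerivWithinAt_univ, ← Iic_union_Ici]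
    exact hleft.union (hasDerivWithinAt_Ioi_iff_Ici.1 hright)
  · have hVr : Vr δa δb =ᶠ[𝓝 e] fun u => 1 / 2 * log (δb ^ 2 / (δb ^ 2 - u ^ 2)) := by
      filter_upwards [Ioi_mem_nhds he] with u hu
      simp [Vr, mem_Ioi.1 hu]
    rw [eta, if_pos he, mul_one_div]
    exact (hasDerivAt_half_log_barrier (by nlinarith)).congr_of_eventuallyEq hVr

lemma Vr_nonneg (hea : -δa < e) (heb : e < δb) : 0 ≤ Vr δa δb e := by
  unfold Vr
  split_ifs with he
  · exact half_log_barrier_nonneg (by nlinarith)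
  · exact half_log_barrier_nonneg (by nlinarith)

lemma Vr_bounds (hδa : 0 < δa) (hδb : 0 < δb) (hea : -δa < e) (heb : e < δb)
    (hM : Vr δa δb e ≤ M) :
    -δa * √(1 - exp (-(2 * M))) ≤ e ∧ e ≤ δb * √(1 - exp (-(2 * M))) := by
  unfold Vr at hM
  split_ifs at hM with he
  · have := abs_le_of_half_log_barrier_le hδb (by nlinarith) hM
    exact ⟨by nlinarith [sqrt_nonneg (1 - exp (-(2 * M)))], (abs_le.1 this).2⟩
  · have := abs_le_of_half_log_barrier_le hδa (by nlinarith) hM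
    exact ⟨by linarith [(abs_le.1 this).1], by nlinarith [sqrt_nonneg (1 - exp (-(2 * M)))]⟩

end Barrier

lemma intervalIntegral_zero_nonneg_of_mul_nonneg {Ω : ℝ → ℝ} (h0 : Ω 0 = 0)
    (h : ∀ s, 0 ≤ s * Ω s) (b : ℝ) : 0 ≤ ∫ τ in (0 : ℝ)..b, Ω τ := by
  rcases le_total 0 b with hb | hb
  · refine intervalIntegral.integral_nonneg hb fun u hu => ?_
    rcases hu.1.eq_or_lt with rfl | hu0
    · rw [h0]
    · exact nonneg_of_mul_nonneg_right (h u) hu0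
  · rw [intervalIntegral.integral_symm, neg_nonneg, ← neg_nonneg, ← intervalIntegral.integral_neg]
    refine intervalIntegral.integral_nonneg hb fun u hu => ?_
    rcases hu.2.eq_or_lt with rfl | hu0
    · rw [h0, neg_zero]
    · exact neg_nonneg.2 (nonpos_of_mul_nonneg_right (h u) hu0)

section Kinematics

variable {x y θ : ℝ → ℝ} {xT yT d v ω t : ℝ}

lemma hasDerivAt_rng (hx : HasDerivAt x (v * cos (θ t)) t) (hy : HasDerivAt y (v * sin (θ t)) t)
    (hr : rng x y xT yT t ≠ 0) :
    HasDerivAt (rng x y xT yT) (v * ebx x y θ xT yT t / rng x y xT yT t) t := by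
  have hq : (x t - xT) ^ 2 + (y t - yT) ^ 2 ≠ 0 := fun h => hr (by simp [rng, h])
  refine ((((hx.sub_const xT).pow 2).add ((hy.sub_const yT).pow 2)).sqrt hq).congr_deriv ?_
  simp only [rng, ebx, Pi.add_apply, Pi.pow_apply]
  field_simp
  ring

lemma hasDerivAt_ebx (hx : HasDerivAt x (v * cos (θ t)) t) (hy : HasDerivAt y (v * sin (θ t)) t)
    (hθ : HasDerivAt θ ω t) :
    HasDerivAt (ebx x y θ xT yT) (v + ω * (eby x y θ xT yT d t - d)) t := by
  refine (((hx.sub_const xT).mul hθ.cos).add ((hy.sub_const yT).mul hθ.sin)).congr_deriv ?_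
  simp only [eby]
  linear_combination v * sin_sq_add_cos_sq (θ t)

lemma hasDerivAt_eby (hx : HasDerivAt x (v * cos (θ t)) t) (hy : HasDerivAt y (v * sin (θ t)) t)
    (hθ : HasDerivAt θ ω t) :
    HasDerivAt (eby x y θ xT yT d) (-(ω * ebx x y θ xT yT t)) t := by
  refine ((((hx.sub_const xT).neg.mul hθ.sin).add ((hy.sub_const yT).mul hθ.cos)).add_const
    d).congr_deriv ?_
  simp only [ebx, Pi.neg_apply]
  ring

lemma hasDerivAt_half_sq_ebx_add_sq_eby (hx : HasDerivAt x (v * cos (θ t)) t)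
    (hy : HasDerivAt y (v * sin (θ t)) t) (hθ : HasDerivAt θ ω t) :
    HasDerivAt (fun s => 1 / 2 * (ebx x y θ xT yT s ^ 2 + eby x y θ xT yT d s ^ 2))
      (ebx x y θ xT yT t * (v - d * ω)) t := by
  refine ((((hasDerivAt_ebx (d := d) hx hy hθ).pow 2).add
    ((hasDerivAt_eby hx hy hθ).pow 2)).const_mul (1 / 2 : ℝ)).congr_deriv ?_
  ring

end Kinematics

lemma continuousAt_rng {x y : ℝ → ℝ} {xT yT t : ℝ} (hx : ContinuousAt x t)
    (hy : ContinuousAt y t) : ContinuousAt (rng x y xT yT) t :=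
  (((hx.sub continuousAt_const).pow 2).add ((hy.sub continuousAt_const).pow 2)).sqrt

def ClosedLoopAt (x y θ z Ω : ℝ → ℝ) (v d k1 k2 κ ri ro xT yT t : ℝ) : Prop :=
  HasDerivAt x (v * cos (θ t)) t ∧
  HasDerivAt y (v * sin (θ t)) t ∧
  HasDerivAt z (-κ * z t + (1 / 2) * (rng x y xT yT t) ^ 2) t ∧
  HasDerivAt θ (v / d + v * k1 * Ω (beta x y z κ xT yT t) +
    v * k2 * ((rng x y xT yT t - d) / rng x y xT yT t) *
      eta (d - ri) (ro - d) (rng x y xT yT t - d)) t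

noncomputable def lyapunov (x y θ z Ω : ℝ → ℝ) (d k1 k2 κ ri ro xT yT t : ℝ) : ℝ :=
  (1 / 2) * ((ebx x y θ xT yT t) ^ 2 + (eby x y θ xT yT d t) ^ 2) +
    d * k2 * Vr (d - ri) (ro - d) (rng x y xT yT t - d) +
    d * k1 * ∫ τ in (0 : ℝ)..(beta x y z κ xT yT t), Ω τ

section Lyapunov

variable {x y θ z Ω : ℝ → ℝ} {v d k1 k2 κ ri ro xT yT t M : ℝ}

lemma hasDerivAt_beta {r' : ℝ}
    (hz : HasDerivAt z (-κ * z t + (1 / 2) * (rng x y xT yT t) ^ 2) t)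
    (hr : HasDerivAt (rng x y xT yT) r' t) :
    HasDerivAt (beta x y z κ xT yT) (-κ * beta x y z κ xT yT t + rng x y xT yT t * r') t := by
  refine ((hz.const_mul (-κ)).add ((hr.pow 2).const_mul (1 / 2 : ℝ))).congr_deriv ?_
  simp only [beta]
  ring

lemma hasDerivAt_lyapunov (hΩ : Continuous Ω) (hd : d ≠ 0) (hri : 0 < ri)
    (hr : rng x y xT yT t ∈ Ioo ri ro) (hloop : ClosedLoopAt x y θ z Ω v d k1 k2 κ ri ro xT yT t) :
    HasDerivAt (lyapunov x y θ z Ω d k1 k2 κ ri ro xT yT)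
      (-(d * k1 * κ * beta x y z κ xT yT t * Ω (beta x y z κ xT yT t))) t := by
  obtain ⟨hx, hy, hz, hθ⟩ := hloop
  have hr0 : rng x y xT yT t ≠ 0 := (hri.trans hr.1).ne'
  have hrng := hasDerivAt_rng hx hy hr0
  have hbarrier := (Vr_hasDerivAt (δa := d - ri) (δb := ro - d) (e := rng x y xT yT t - d)
    (by linarith [hr.1]) (by linarith [hr.2])).comp t (hrng.sub_const d)
  have hprimitive : HasDerivAt (fun u => ∫ τ in (0 : ℝ)..u, Ω τ) (Ω (beta x y z κ xT yT t))
      (beta x y z κ xT yT t) :=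
    intervalIntegral.integral_hasDerivAt_right (hΩ.intervalIntegrable _ _)
      (hΩ.stronglyMeasurableAtFilter _ _) hΩ.continuousAt
  have hintegral := hprimitive.comp t (hasDerivAt_beta hz hrng)
  refine (((hasDerivAt_half_sq_ebx_add_sq_eby (d := d) hx hy hθ).add
    (hbarrier.const_mul (d * k2))).add (hintegral.const_mul (d * k1))).congr_deriv ?_
  field_simp
  ring

lemma antitoneOn_lyapunov (hΩ : Continuous Ω) (hΩsign : ∀ s, 0 ≤ s * Ω s) (hri : 0 < ri)
    (hd : 0 < d) (hk1 : 0 ≤ k1) (hκ : 0 ≤ κ) {a b : ℝ}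
    (hr : ∀ s ∈ Icc a b, rng x y xT yT s ∈ Ioo ri ro)
    (hloop : ∀ s ∈ Icc a b, ClosedLoopAt x y θ z Ω v d k1 k2 κ ri ro xT yT s) :
    AntitoneOn (lyapunov x y θ z Ω d k1 k2 κ ri ro xT yT) (Icc a b) := by
  have hderiv : ∀ s ∈ Icc a b, HasDerivAt (lyapunov x y θ z Ω d k1 k2 κ ri ro xT yT)
      (-(d * k1 * κ * beta x y z κ xT yT s * Ω (beta x y z κ xT yT s))) s :=
    fun s hs => hasDerivAt_lyapunov hΩ hd.ne' hri (hr s hs) (hloop s hs)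
  refine antitoneOn_of_hasDerivWithinAt_nonpos (convex_Icc a b)
    (fun s hs => (hderiv s hs).continuousAt.continuousWithinAt)
    (fun s hs => (hderiv s (interior_subset hs)).hasDerivWithinAt) fun s _ => ?_
  have := hΩsign (beta x y z κ xT yT s)
  have : 0 ≤ d * k1 * κ := by positivity
  nlinarith

lemma bounds_of_lyapunov_le (hΩ0 : Ω 0 = 0) (hΩsign : ∀ s, 0 ≤ s * Ω s) (hd : 0 < d)
    (hrid : ri < d) (hdro : d < ro) (hk1 : 0 ≤ k1) (hk2 : 0 < k2)
    (hr : rng x y xT yT t ∈ Ioo ri ro) (hV : lyapunov x y θ z Ω d k1 k2 κ ri ro xT yT t ≤ M) :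
    let Υ := √(1 - exp (-(2 * M) / (d * k2)))
    (ebx x y θ xT yT t ^ 2 + eby x y θ xT yT d t ^ 2 ≤ 2 * M) ∧
      (-(d - ri) * Υ ≤ rng x y xT yT t - d ∧ rng x y xT yT t - d ≤ (ro - d) * Υ) ∧
      (ri + (d - ri) * (1 - Υ) ≤ rng x y xT yT t ∧ rng x y xT yT t ≤ ro - (ro - d) * (1 - Υ)) := by
  intro Υ
  have hea : -(d - ri) < rng x y xT yT t - d := by linarith [hr.1]
  have heb : rng x y xT yT t - d < ro - d := by linarith [hr.2]
  have hbarrier := mul_nonneg (mul_nonneg hd.le hk2.le) (Vr_nonneg hea heb)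
  have hintegral := mul_nonneg (mul_nonneg hd.le hk1)
    (intervalIntegral_zero_nonneg_of_mul_nonneg hΩ0 hΩsign (beta x y z κ xT yT t))
  have hkinetic := add_nonneg (sq_nonneg (ebx x y θ xT yT t)) (sq_nonneg (eby x y θ xT yT d t))
  unfold lyapunov at hV
  have hVr : Vr (d - ri) (ro - d) (rng x y xT yT t - d) ≤ M / (d * k2) := by
    rw [le_div_iff₀ (by positivity), mul_comm]
    linarith
  have hΥ := Vr_bounds (by linarith) (by linarith) hea heb hVr
  rw [← mul_div_assoc, ← neg_div] at hΥ
  exact ⟨by linarith, hΥ, by linarith [hΥ.1], by linarith [hΥ.2]⟩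

end Lyapunov

theorem theorem4ab_bounds_general
    (x y θ z : ℝ → ℝ) (Ω : ℝ → ℝ) (v d k1 k2 κ ri ro xT yT : ℝ)
    (hΩcont : Continuous Ω) (hΩ0 : Ω 0 = 0) (hΩpos : ∀ s : ℝ, s ≠ 0 → 0 < s * Ω s)
    (hri : 0 < ri) (hrid : ri < d) (hdro : d < ro)
    (hk1 : 0 < k1) (hk2 : 0 < k2) (hκ : 0 < κ)
    (hxdiff : ∀ t ≥ (0 : ℝ), DifferentiableAt ℝ x t)
    (hydiff : ∀ t ≥ (0 : ℝ), DifferentiableAt ℝ y t)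
    (hclosedloop : ∀ t ≥ (0 : ℝ), rng x y xT yT t ∈ Set.Ioo ri ro →
      HasDerivAt x (v * Real.cos (θ t)) t ∧
      HasDerivAt y (v * Real.sin (θ t)) t ∧
      HasDerivAt z (-κ * z t + (1 / 2) * (rng x y xT yT t) ^ 2) t ∧
      HasDerivAt θ (v / d + v * k1 * Ω (beta x y z κ xT yT t) +
        v * k2 * ((rng x y xT yT t - d) / rng x y xT yT t) *
          eta (d - ri) (ro - d) (rng x y xT yT t - d)) t)
    (hr0 : rng x y xT yT 0 ∈ Set.Ioo ri ro)
    (V20 Υ₂ : ℝ)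
    (hV20 : V20 = (1 / 2) * ((ebx x y θ xT yT 0) ^ 2 + (eby x y θ xT yT d 0) ^ 2) +
      d * k2 * Vr (d - ri) (ro - d) (rng x y xT yT 0 - d) +
      d * k1 * ∫ τ in (0 : ℝ)..(beta x y z κ xT yT 0), Ω τ)
    (hΥ₂ : Υ₂ = Real.sqrt (1 - Real.exp (-(2 * V20) / (d * k2)))) :
    ∀ t ≥ (0 : ℝ),
      ((ebx x y θ xT yT t) ^ 2 + (eby x y θ xT yT d t) ^ 2 ≤ 2 * V20) ∧
      (-(d - ri) * Υ₂ ≤ rng x y xT yT t - d ∧ rng x y xT yT t - d ≤ (ro - d) * Υ₂) ∧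
      (ri + (d - ri) * (1 - Υ₂) ≤ rng x y xT yT t ∧
        rng x y xT yT t ≤ ro - (ro - d) * (1 - Υ₂)) := by
  subst hΥ₂
  have hd : 0 < d := hri.trans hrid
  have hΩsign : ∀ s, 0 ≤ s * Ω s := fun s => by
    rcases eq_or_ne s 0 with rfl | hs
    · rw [zero_mul]
    · exact (hΩpos s hs).le
  have hV : ∀ T ≥ (0 : ℝ), (∀ s ∈ Icc 0 T, rng x y xT yT s ∈ Ioo ri ro) →
      lyapunov x y θ z Ω d k1 k2 κ ri ro xT yT T ≤ V20 := fun T hT hr =>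
    (antitoneOn_lyapunov hΩcont hΩsign hri hd hk1.le hκ.le hr
      (fun s hs => hclosedloop s hs.1 (hr s hs)) (left_mem_Icc.2 hT) (right_mem_Icc.2 hT)
      hT).trans_eq hV20.symm
  have hΥ₂_lt_one : √(1 - exp (-(2 * V20) / (d * k2))) < 1 := by
    rw [sqrt_lt' one_pos]
    linarith [exp_pos (-(2 * V20) / (d * k2))]
  have hr : ∀ t ≥ (0 : ℝ), rng x y xT yT t ∈ Ioo ri ro :=
    isOpen_Ioo.forall_ge_mem_of_trapped isClosed_Icc
      (fun r hr => ⟨by nlinarith [hr.1], by nlinarith [hr.2]⟩)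
      (fun t ht => (continuousAt_rng (hxdiff t ht).continuousAt
        (hydiff t ht).continuousAt).continuousWithinAt) hr0
      fun T hT h => (bounds_of_lyapunov_le hΩ0 hΩsign hd hrid hdro hk1.le hk2
        (h T (right_mem_Icc.2 hT)) (hV T hT h)).2.2
  exact fun t ht => bounds_of_lyapunov_le hΩ0 hΩsign hd hrid hdro hk1.le hk2 (hr t ht)
    (hV t ht fun s hs => hr s hs.1)

/-- Theorem 4(a),(b): Under the hypotheses of Theorem 2, with
V₂(0) = (1/2)(ē_x(0)² + ē_y(0)²) + d·k₂·V_r(r(0) − d) + d·k₁·∫₀^{β(0)} Ω and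
Υ₂ = √(1 − exp(−2·V₂(0)/(d·k₂))), for all t ≥ 0:
ē_x(t)² + ē_y(t)² ≤ 2·V₂(0), −δ_a·Υ₂ ≤ r(t) − d ≤ δ_b·Υ₂ and
r_i + δ_a·(1 − Υ₂) ≤ r(t) ≤ r_o − δ_b·(1 − Υ₂). -/
theorem theorem4ab_bounds
    (x y θ z : ℝ → ℝ) (Ω : ℝ → ℝ) (v d k1 k2 κ ri ro xT yT : ℝ)
    (hΩcont : Continuous Ω) (hΩ0 : Ω 0 = 0) (hΩpos : ∀ s : ℝ, s ≠ 0 → 0 < s * Ω s)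
    (hv : v ≠ 0) (hri : 0 < ri) (hrid : ri < d) (hdro : d < ro)
    (hk1 : 0 < k1) (hk2 : 0 < k2) (hκ : 0 < κ)
    (hxdiff : ∀ t ≥ (0 : ℝ), DifferentiableAt ℝ x t)
    (hydiff : ∀ t ≥ (0 : ℝ), DifferentiableAt ℝ y t)
    (hθdiff : ∀ t ≥ (0 : ℝ), DifferentiableAt ℝ θ t)
    (hzdiff : ∀ t ≥ (0 : ℝ), DifferentiableAt ℝ z t)
    (hclosedloop : ∀ t ≥ (0 : ℝ), rng x y xT yT t ∈ Set.Ioo ri ro →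
      HasDerivAt x (v * Real.cos (θ t)) t ∧
      HasDerivAt y (v * Real.sin (θ t)) t ∧
      HasDerivAt z (-κ * z t + (1 / 2) * (rng x y xT yT t) ^ 2) t ∧
      HasDerivAt θ (v / d + v * k1 * Ω (beta x y z κ xT yT t) +
        v * k2 * ((rng x y xT yT t - d) / rng x y xT yT t) *
          eta (d - ri) (ro - d) (rng x y xT yT t - d)) t)
    (hr0 : rng x y xT yT 0 ∈ Set.Ioo ri ro)
    (V20 Υ₂ : ℝ)
    (hV20 : V20 = (1 / 2) * ((ebx x y θ xT yT 0) ^ 2 + (eby x y θ xT yT d 0) ^ 2) +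
      d * k2 * Vr (d - ri) (ro - d) (rng x y xT yT 0 - d) +
      d * k1 * ∫ τ in (0 : ℝ)..(beta x y z κ xT yT 0), Ω τ)
    (hΥ₂ : Υ₂ = Real.sqrt (1 - Real.exp (-(2 * V20) / (d * k2)))) :
    ∀ t ≥ (0 : ℝ),
      ((ebx x y θ xT yT t) ^ 2 + (eby x y θ xT yT d t) ^ 2 ≤ 2 * V20) ∧
      (-(d - ri) * Υ₂ ≤ rng x y xT yT t - d ∧ rng x y xT yT t - d ≤ (ro - d) * Υ₂) ∧
      (ri + (d - ri) * (1 - Υ₂) ≤ rng x y xT yT t ∧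
        rng x y xT yT t ≤ ro - (ro - d) * (1 - Υ₂)) :=
  theorem4ab_bounds_general x y θ z Ω v d k1 k2 κ ri ro xT yT hΩcont hΩ0 hΩpos hri hrid hdro hk1 hk2
    hκ hxdiff hydiff hclosedloop hr0 V20 Υ₂ hV20 hΥ₂
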